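/- Let ρ ∈ (0,∞) and set ζ_f = (1+ρ)/(2ρ²), ζ_g = (1−ρ)/(2ρ²), ζ_a = ζ_f − 1, ζ_b = ζ_g − 1. There exist constants 0 < c ≤ C and u₀ > 0 such that for all u ≥ u₀: c ≤ f_ρ(1,u) · u^{−ζ_f} e^{2u} ≤ C, c ≤ g_ρ(1,u) · u^{−ζ_g} e^{2u} ≤ C, c ≤ a_ρ(1,u) · u^{−ζ_a} e^{2u} ≤ C, and c ≤ b_ρ(1,u) · u^{−ζ_b} e^{2u} ≤ C; and for all u ≤ −u₀ the same bounds hold with u replaced by |u| and with the exponent pairs (ζ_f, ζ_g) and (ζ_a, ζ_b) interchanged. The constants c, C, u₀ may be chosen uniformly for ρ in any compact subset of (0,∞). -/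

import Mathlib

open Real MeasureTheory Filter Set

noncomputable section

/-- `S` is the (unique) solution of the ODE
`S'(u) = -8ρ S(u)^{1+ρ}/(1+S(u)^ρ)²` with `S(0) = x`, valued in `(0,∞)`. -/
def IsSsol (ρ x : ℝ) (S : ℝ → ℝ) : Prop :=
  (∀ u : ℝ, 0 < S u) ∧ S 0 = x ∧
    ∀ u : ℝ, HasDerivAt S (-(8 * ρ * S u ^ (1 + ρ)) / (1 + S u ^ ρ) ^ 2) u

/-- `f_ρ(x,·)`, expressed in terms of the solution `S = S_ρ(x,·)`. -/
def fRho (ρ : ℝ) (S : ℝ → ℝ) (r : ℝ) : ℝ :=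
  Real.exp (2 * ∫ u in (0:ℝ)..r, (1 - 2 * (1 + (1 - ρ) * S u ^ ρ) / (1 + S u ^ ρ) ^ 2))

/-- `g_ρ(x,·)`, expressed in terms of the solution `S = S_ρ(x,·)`. -/
def gRho (ρ x : ℝ) (S : ℝ → ℝ) (r : ℝ) : ℝ :=
  x * Real.exp (-2 * ∫ u in (0:ℝ)..r,
      (1 - 2 * ((1 - ρ) * S u ^ ρ + S u ^ (2 * ρ)) / (1 + S u ^ ρ) ^ 2))

/-- `a_ρ(x,·)`. -/
def aRho (ρ x : ℝ) (S : ℝ → ℝ) (r : ℝ) : ℝ :=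
  2 * ρ * fRho ρ S r ^ (1 + ρ) * gRho ρ x S r ^ ρ
    / (fRho ρ S r ^ ρ + gRho ρ x S r ^ ρ) ^ 2

/-- `b_ρ(x,·)`. -/
def bRho (ρ x : ℝ) (S : ℝ → ℝ) (r : ℝ) : ℝ :=
  2 * ρ * fRho ρ S r ^ ρ * gRho ρ x S r ^ (1 + ρ)
    / (fRho ρ S r ^ ρ + gRho ρ x S r ^ ρ) ^ 2

/-!
With `Y = S^ρ` the ODE reads `Y' = -8ρ²Y²/(1+Y)²` and has the first integral
`Y⁻¹ - Y - 2 log Y = 8ρ²u`. The integrands of `f` and `g` are exact derivatives along `Y`, so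
`f = exp ((2 - Y - Y⁻¹ - 2ρ log Y)/(4ρ²))`, `g = exp ((2 - Y - Y⁻¹ + 2ρ log Y)/(4ρ²))` and
`g^ρ = f^ρ Y`. For `u ≥ 1` the first integral traps `Y u` between two positive constants, and
after substituting `2u` from it each normalized quantity is a continuous positive function of
`(ρ, Y, Y u)` on a compact box, hence bounded above and below. The first integral changes sign under
`Y ↦ Y⁻¹`, so `Y(-u) = Y(u)⁻¹`; this exchanges `f` with `g` and `a` with `b`, and the bounds for
`u ≤ -1` are those for `u ≥ 1`.
-/

lemma exists_subset_Icc_of_isCompact {s : Set ℝ} (hs : IsCompact s) (hpos : s ⊆ Ioi 0) :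
    ∃ c C, 0 < c ∧ c ≤ C ∧ s ⊆ Icc c C := by
  rcases s.eq_empty_or_nonempty with rfl | hne
  · exact ⟨1, 1, one_pos, le_rfl, empty_subset _⟩
  · exact ⟨sInf s, sSup s, hpos (hs.sInf_mem hne), csInf_le_csSup hne hs.bddBelow hs.bddAbove,
      subset_Icc_csInf_csSup hs.bddBelow hs.bddAbove⟩

lemma IsCompact.exists_forall_mem_Icc {X ι : Type*} [TopologicalSpace X] [Finite ι] {s : Set X}
    (hs : IsCompact s) {φ : ι → X → ℝ} (hcont : ∀ i, ContinuousOn (φ i) s)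
    (hpos : ∀ i, ∀ x ∈ s, 0 < φ i x) :
    ∃ c C, 0 < c ∧ c ≤ C ∧ ∀ i, ∀ x ∈ s, φ i x ∈ Icc c C := by
  obtain ⟨c, C, hc, hcC, hsub⟩ := exists_subset_Icc_of_isCompact
    (isCompact_iUnion fun i => hs.image_of_continuousOn (hcont i))
    (iUnion_subset fun i => image_subset_iff.2 (hpos i))
  exact ⟨c, C, hc, hcC, fun i x hx => hsub (mem_iUnion_of_mem i (mem_image_of_mem _ hx))⟩

lemma strictAntiOn_inv_sub_sub_two_mul_log :
    StrictAntiOn (fun y : ℝ => y⁻¹ - y - 2 * log y) (Ioi 0) := by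
  intro y (hy : 0 < y) z (hz : 0 < z) hyz
  have := inv_strictAnti₀ hy hyz
  have := log_lt_log hy hyz
  simp only
  linarith

def normalizedProfile (ζ ρ y t : ℝ) : ℝ := exp ((1 - y) / (2 * ρ ^ 2) - ζ * log t)

lemma exists_normalizedProfile_bounds {P Q A B : ℝ} (hP : 0 < P) (hA : 0 < A) :
    ∃ c C, 0 < c ∧ c ≤ C ∧ ∀ ρ ∈ Icc P Q, ∀ y ∈ Icc (0 : ℝ) 1, ∀ t ∈ Icc A B,
      normalizedProfile ((1 + ρ) / (2 * ρ ^ 2)) ρ y t ∈ Icc c C ∧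
      normalizedProfile ((1 - ρ) / (2 * ρ ^ 2)) ρ y t ∈ Icc c C ∧
      normalizedProfile ((1 + ρ) / (2 * ρ ^ 2)) ρ y t * (2 * ρ * t / (1 + y) ^ 2) ∈ Icc c C ∧
      normalizedProfile ((1 - ρ) / (2 * ρ ^ 2)) ρ y t * (2 * ρ * t / (1 + y) ^ 2) ∈ Icc c C := by
  set box := Icc P Q ×ˢ Icc (0 : ℝ) 1 ×ˢ Icc A B
  have hbox : IsCompact box := isCompact_Icc.prod (isCompact_Icc.prod isCompact_Icc)
  have hpos : ∀ p ∈ box, 0 < p.1 ∧ 0 ≤ p.2.1 ∧ 0 < p.2.2 := fun p ⟨hρ, hy, ht⟩ =>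
    ⟨hP.trans_le hρ.1, hy.1, hA.trans_le ht.1⟩
  let φ : Fin 4 → ℝ × ℝ × ℝ → ℝ := ![
    fun p => normalizedProfile ((1 + p.1) / (2 * p.1 ^ 2)) p.1 p.2.1 p.2.2,
    fun p => normalizedProfile ((1 - p.1) / (2 * p.1 ^ 2)) p.1 p.2.1 p.2.2,
    fun p => normalizedProfile ((1 + p.1) / (2 * p.1 ^ 2)) p.1 p.2.1 p.2.2 *
      (2 * p.1 * p.2.2 / (1 + p.2.1) ^ 2),
    fun p => normalizedProfile ((1 - p.1) / (2 * p.1 ^ 2)) p.1 p.2.1 p.2.2 *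
      (2 * p.1 * p.2.2 / (1 + p.2.1) ^ 2)]
  have hcont : ∀ i, ContinuousOn (φ i) box := by
    intro i
    refine continuousOn_of_forall_continuousAt fun p hp => ?_
    obtain ⟨hρ, hy, ht⟩ := hpos p hp
    have : 2 * p.1 ^ 2 ≠ 0 := by positivity
    have : (1 + p.2.1) ^ 2 ≠ 0 := by positivity
    fin_cases i <;>
      simp only [φ, Fin.zero_eta, Fin.mk_one, Fin.reduceFinMk, Matrix.cons_val,
        normalizedProfile] <;>
      fun_prop (disch := first | assumption | exact ht.ne')
  obtain ⟨c, C, hc, hcC, h⟩ := hbox.exists_forall_mem_Icc hcont fun i p hp => by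
    obtain ⟨hρ, hy, ht⟩ := hpos p hp
    fin_cases i <;>
      simp only [φ, Fin.zero_eta, Fin.mk_one, Fin.reduceFinMk, Matrix.cons_val,
        normalizedProfile] <;>
      positivity
  exact ⟨c, C, hc, hcC, fun ρ hρ y hy t ht =>
    ⟨h 0 (ρ, y, t) ⟨hρ, hy, ht⟩, h 1 (ρ, y, t) ⟨hρ, hy, ht⟩, h 2 (ρ, y, t) ⟨hρ, hy, ht⟩,
      h 3 (ρ, y, t) ⟨hρ, hy, ht⟩⟩⟩

namespace IsSsol

variable {ρ x : ℝ} {S : ℝ → ℝ}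

lemma hasDerivAt_rpow (hS : IsSsol ρ x S) (u : ℝ) :
    HasDerivAt (fun v => S v ^ ρ) (-(8 * ρ ^ 2 * (S u ^ ρ) ^ 2) / (1 + S u ^ ρ) ^ 2) u := by
  have hSu := hS.1 u
  refine ((hS.2.2 u).rpow_const (p := ρ) (Or.inl hSu.ne')).congr_deriv ?_
  have hpow : S u ^ (1 + ρ) * S u ^ (ρ - 1) = (S u ^ ρ) ^ 2 := by
    rw [← rpow_add hSu, ← rpow_natCast, ← rpow_mul hSu.le]
    ring_nf
  rw [← hpow]
  ring

lemma continuous_rpow (hS : IsSsol ρ x S) : Continuous fun u => S u ^ ρ :=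
  continuous_iff_continuousAt.2 fun u => (hS.hasDerivAt_rpow u).continuousAt

lemma inv_sub_sub_two_mul_log (hS : IsSsol ρ 1 S) (r : ℝ) :
    (S r ^ ρ)⁻¹ - S r ^ ρ - 2 * log (S r ^ ρ) = 8 * ρ ^ 2 * r := by
  have hder : ∀ u, HasDerivAt
      (fun v => (S v ^ ρ)⁻¹ - S v ^ ρ - 2 * log (S v ^ ρ) - 8 * ρ ^ 2 * v) 0 u := by
    intro u
    have hY := hS.hasDerivAt_rpow u
    have hYpos : 0 < S u ^ ρ := rpow_pos_of_pos (hS.1 u) ρ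
    have hYu := hYpos.ne'
    refine ((((hY.inv hYu).sub hY).sub ((hY.log hYu).const_mul 2)).sub
      ((hasDerivAt_id u).const_mul (8 * ρ ^ 2))).congr_deriv ?_
    field_simp
    ring
  have := is_const_of_deriv_eq_zero (fun u => (hder u).differentiableAt)
    (fun u => (hder u).deriv) r 0
  simp only [hS.2.1, one_rpow, inv_one, log_one] at this
  linarith

lemma integral_comp_rpow (hρ : ρ ≠ 0) (hS : IsSsol ρ 1 S) {F h : ℝ → ℝ}
    (hF : ∀ y, 0 < y → HasDerivAt F (-(h y * (1 + y) ^ 2) / (8 * ρ ^ 2 * y ^ 2)) y)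
    (hh : ContinuousOn h (Ioi 0)) (r : ℝ) :
    ∫ u in (0 : ℝ)..r, h (S u ^ ρ) = F (S r ^ ρ) - F 1 := by
  have hY : ∀ u, 0 < S u ^ ρ := fun u => rpow_pos_of_pos (hS.1 u) ρ
  have hder : ∀ u, HasDerivAt (fun v => F (S v ^ ρ)) (h (S u ^ ρ)) u := by
    intro u
    refine ((hF _ (hY u)).comp u (hS.hasDerivAt_rpow u)).congr_deriv ?_
    have := hY u
    field_simp
  rw [intervalIntegral.integral_eq_sub_of_hasDerivAt (fun u _ => hder u)
    ((hh.comp_continuous hS.continuous_rpow hY).intervalIntegrable 0 r), hS.2.1, one_rpow]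

lemma fRho_eq (hρ : ρ ≠ 0) (hS : IsSsol ρ 1 S) (r : ℝ) :
    fRho ρ S r = exp ((2 - S r ^ ρ - (S r ^ ρ)⁻¹ - 2 * ρ * log (S r ^ ρ)) / (4 * ρ ^ 2)) := by
  have hF : ∀ y : ℝ, 0 < y → HasDerivAt (fun y => (2 - y - y⁻¹ - 2 * ρ * log y) / (8 * ρ ^ 2))
      (-((1 - 2 * (1 + (1 - ρ) * y) / (1 + y) ^ 2) * (1 + y) ^ 2) / (8 * ρ ^ 2 * y ^ 2)) y := by
    intro y hy
    refine ((((hasDerivAt_const y 2).sub (hasDerivAt_id y)).sub (hasDerivAt_inv hy.ne')).sub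
      ((hasDerivAt_log hy.ne').const_mul (2 * ρ))).div_const _ |>.congr_deriv ?_
    field_simp
    ring
  have hh : ContinuousOn (fun y : ℝ => 1 - 2 * (1 + (1 - ρ) * y) / (1 + y) ^ 2) (Ioi 0) :=
    fun y (hy : 0 < y) => by
      have : (1 + y) ^ 2 ≠ 0 := by positivity
      fun_prop (disch := assumption)
  rw [fRho, hS.integral_comp_rpow hρ hF hh]
  congr 1
  simp only [inv_one, log_one]
  ring

lemma gRho_eq (hρ : ρ ≠ 0) (hS : IsSsol ρ 1 S) (r : ℝ) :
    gRho ρ 1 S r = exp ((2 - S r ^ ρ - (S r ^ ρ)⁻¹ + 2 * ρ * log (S r ^ ρ)) / (4 * ρ ^ 2)) := by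
  have hF : ∀ y : ℝ, 0 < y → HasDerivAt (fun y => (y + y⁻¹ - 2 - 2 * ρ * log y) / (8 * ρ ^ 2))
      (-((1 - 2 * ((1 - ρ) * y + y ^ 2) / (1 + y) ^ 2) * (1 + y) ^ 2) / (8 * ρ ^ 2 * y ^ 2))
      y := by
    intro y hy
    refine ((((hasDerivAt_id y).add (hasDerivAt_inv hy.ne')).sub (hasDerivAt_const y 2)).sub
      ((hasDerivAt_log hy.ne').const_mul (2 * ρ))).div_const _ |>.congr_deriv ?_
    field_simp
    ring
  have hh : ContinuousOn (fun y : ℝ => 1 - 2 * ((1 - ρ) * y + y ^ 2) / (1 + y) ^ 2) (Ioi 0) :=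
    fun y (hy : 0 < y) => by
      have : (1 + y) ^ 2 ≠ 0 := by positivity
      fun_prop (disch := assumption)
  have hsq (u : ℝ) : S u ^ (2 * ρ) = (S u ^ ρ) ^ 2 := by
    rw [mul_comm, rpow_mul (hS.1 u).le, rpow_two]
  simp only [gRho, hsq]
  rw [hS.integral_comp_rpow hρ hF hh, one_mul]
  congr 1
  simp only [inv_one, log_one]
  ring

lemma rpow_apply_neg (hS : IsSsol ρ 1 S) (u : ℝ) : S (-u) ^ ρ = (S u ^ ρ)⁻¹ := by
  have hY (v : ℝ) : 0 < S v ^ ρ := rpow_pos_of_pos (hS.1 v) ρ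
  refine strictAntiOn_inv_sub_sub_two_mul_log.injOn (hY (-u)) (inv_pos.2 (hY u)) ?_
  simp only [hS.inv_sub_sub_two_mul_log, inv_inv, log_inv]
  linarith [hS.inv_sub_sub_two_mul_log u]

lemma fRho_neg (hρ : ρ ≠ 0) (hS : IsSsol ρ 1 S) (u : ℝ) : fRho ρ S (-u) = gRho ρ 1 S u := by
  rw [hS.fRho_eq hρ, hS.gRho_eq hρ, hS.rpow_apply_neg, inv_inv, log_inv]
  ring_nf

lemma gRho_neg (hρ : ρ ≠ 0) (hS : IsSsol ρ 1 S) (u : ℝ) : gRho ρ 1 S (-u) = fRho ρ S u := by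
  rw [hS.fRho_eq hρ, hS.gRho_eq hρ, hS.rpow_apply_neg, inv_inv, log_inv]
  ring_nf

lemma aRho_neg (hρ : ρ ≠ 0) (hS : IsSsol ρ 1 S) (u : ℝ) : aRho ρ 1 S (-u) = bRho ρ 1 S u := by
  rw [aRho, bRho, hS.fRho_neg hρ, hS.gRho_neg hρ, add_comm]
  ring

lemma bRho_neg (hρ : ρ ≠ 0) (hS : IsSsol ρ 1 S) (u : ℝ) : bRho ρ 1 S (-u) = aRho ρ 1 S u := by
  rw [aRho, bRho, hS.fRho_neg hρ, hS.gRho_neg hρ, add_comm]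
  ring

lemma gRho_rpow (hρ : ρ ≠ 0) (hS : IsSsol ρ 1 S) (r : ℝ) :
    gRho ρ 1 S r ^ ρ = fRho ρ S r ^ ρ * S r ^ ρ := by
  rw [hS.fRho_eq hρ, hS.gRho_eq hρ, ← exp_mul, ← exp_mul,
    ← exp_log (rpow_pos_of_pos (hS.1 r) ρ), ← exp_add, log_exp]
  congr 1
  field_simp
  ring

lemma aRho_eq (hρ : ρ ≠ 0) (hS : IsSsol ρ 1 S) (r : ℝ) :
    aRho ρ 1 S r = 2 * ρ * fRho ρ S r * S r ^ ρ / (1 + S r ^ ρ) ^ 2 := by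
  have hf : 0 < fRho ρ S r := by rw [hS.fRho_eq hρ]; positivity
  have : 0 < S r ^ ρ := rpow_pos_of_pos (hS.1 r) ρ
  have : 0 < fRho ρ S r ^ ρ := rpow_pos_of_pos hf ρ
  rw [aRho, hS.gRho_rpow hρ, rpow_add hf, rpow_one]
  field_simp

lemma bRho_eq (hρ : ρ ≠ 0) (hS : IsSsol ρ 1 S) (r : ℝ) :
    bRho ρ 1 S r = 2 * ρ * gRho ρ 1 S r * S r ^ ρ / (1 + S r ^ ρ) ^ 2 := by
  have hf : 0 < fRho ρ S r := by rw [hS.fRho_eq hρ]; positivity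
  have hg : 0 < gRho ρ 1 S r := by rw [hS.gRho_eq hρ]; positivity
  have : 0 < S r ^ ρ := rpow_pos_of_pos (hS.1 r) ρ
  have : 0 < fRho ρ S r ^ ρ := rpow_pos_of_pos hf ρ
  rw [bRho, rpow_add hg, rpow_one, hS.gRho_rpow hρ]
  field_simp

lemma two_mul_eq (hρ : ρ ≠ 0) (hS : IsSsol ρ 1 S) (u : ℝ) :
    2 * u = ((S u ^ ρ)⁻¹ - S u ^ ρ - 2 * log (S u ^ ρ)) / (4 * ρ ^ 2) := by
  rw [hS.inv_sub_sub_two_mul_log]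
  field_simp
  ring

lemma fRho_mul_rpow_mul_exp (hρ : ρ ≠ 0) (hS : IsSsol ρ 1 S) {u : ℝ} (hu : 0 < u) :
    fRho ρ S u * u ^ (-((1 + ρ) / (2 * ρ ^ 2))) * exp (2 * u) =
      normalizedProfile ((1 + ρ) / (2 * ρ ^ 2)) ρ (S u ^ ρ) (S u ^ ρ * u) := by
  have hY : 0 < S u ^ ρ := rpow_pos_of_pos (hS.1 u) ρ
  rw [hS.fRho_eq hρ, normalizedProfile, rpow_def_of_pos hu, log_mul hY.ne' hu.ne',
    hS.two_mul_eq hρ u, ← exp_add, ← exp_add]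
  congr 1
  field_simp
  ring

lemma gRho_mul_rpow_mul_exp (hρ : ρ ≠ 0) (hS : IsSsol ρ 1 S) {u : ℝ} (hu : 0 < u) :
    gRho ρ 1 S u * u ^ (-((1 - ρ) / (2 * ρ ^ 2))) * exp (2 * u) =
      normalizedProfile ((1 - ρ) / (2 * ρ ^ 2)) ρ (S u ^ ρ) (S u ^ ρ * u) := by
  have hY : 0 < S u ^ ρ := rpow_pos_of_pos (hS.1 u) ρ
  rw [hS.gRho_eq hρ, normalizedProfile, rpow_def_of_pos hu, log_mul hY.ne' hu.ne',
    hS.two_mul_eq hρ u, ← exp_add, ← exp_add]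
  congr 1
  field_simp
  ring

lemma aRho_mul_rpow_mul_exp (hρ : ρ ≠ 0) (hS : IsSsol ρ 1 S) {u : ℝ} (hu : 0 < u) :
    aRho ρ 1 S u * u ^ (-((1 + ρ) / (2 * ρ ^ 2) - 1)) * exp (2 * u) =
      normalizedProfile ((1 + ρ) / (2 * ρ ^ 2)) ρ (S u ^ ρ) (S u ^ ρ * u) *
        (2 * ρ * (S u ^ ρ * u) / (1 + S u ^ ρ) ^ 2) := by
  rw [← hS.fRho_mul_rpow_mul_exp hρ hu, hS.aRho_eq hρ, neg_sub', sub_neg_eq_add,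
    rpow_add_one hu.ne']
  ring

lemma bRho_mul_rpow_mul_exp (hρ : ρ ≠ 0) (hS : IsSsol ρ 1 S) {u : ℝ} (hu : 0 < u) :
    bRho ρ 1 S u * u ^ (-((1 - ρ) / (2 * ρ ^ 2) - 1)) * exp (2 * u) =
      normalizedProfile ((1 - ρ) / (2 * ρ ^ 2)) ρ (S u ^ ρ) (S u ^ ρ * u) *
        (2 * ρ * (S u ^ ρ * u) / (1 + S u ^ ρ) ^ 2) := by
  rw [← hS.gRho_mul_rpow_mul_exp hρ hu, hS.bRho_eq hρ, neg_sub', sub_neg_eq_add,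
    rpow_add_one hu.ne']
  ring

lemma rpow_le_one (hS : IsSsol ρ 1 S) {u : ℝ} (hu : 0 ≤ u) : S u ^ ρ ≤ 1 := by
  refine (strictAntiOn_inv_sub_sub_two_mul_log.le_iff_ge (zero_lt_one' ℝ)
    (rpow_pos_of_pos (hS.1 u) ρ)).1 ?_
  simp only [hS.inv_sub_sub_two_mul_log, inv_one, log_one, sub_self, mul_zero]
  positivity

lemma one_le_mul_rpow_mul (hS : IsSsol ρ 1 S) {u : ℝ} (hu : 1 ≤ u) :
    1 ≤ (8 * ρ ^ 2 + 1) * (S u ^ ρ * u) := by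
  have hy : 0 < S u ^ ρ := rpow_pos_of_pos (hS.1 u) ρ
  have hinv : (S u ^ ρ)⁻¹ ≤ (8 * ρ ^ 2 + 1) * u := by
    nlinarith [hS.inv_sub_sub_two_mul_log u, hS.rpow_le_one (by linarith : (0 : ℝ) ≤ u),
      log_nonpos hy.le (hS.rpow_le_one (by linarith : (0 : ℝ) ≤ u)), sq_nonneg ρ]
  nlinarith [mul_le_mul_of_nonneg_left hinv hy.le, mul_inv_cancel₀ hy.ne']

lemma mul_rpow_mul_le_three (hS : IsSsol ρ 1 S) (u : ℝ) : 8 * ρ ^ 2 * (S u ^ ρ * u) ≤ 3 := by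
  have hy : 0 < S u ^ ρ := rpow_pos_of_pos (hS.1 u) ρ
  have hlog : -log (S u ^ ρ) ≤ (S u ^ ρ)⁻¹ - 1 := by
    rw [← log_inv]
    exact log_le_sub_one_of_pos (inv_pos.2 hy)
  have h8 : 8 * ρ ^ 2 * u ≤ 3 * (S u ^ ρ)⁻¹ := by linarith [hS.inv_sub_sub_two_mul_log u]
  nlinarith [mul_le_mul_of_nonneg_left h8 hy.le, mul_inv_cancel₀ hy.ne']

lemma rpow_mul_mem_Icc {P Q : ℝ} (hP : 0 < P) (hρ : ρ ∈ Icc P Q) (hS : IsSsol ρ 1 S) {u : ℝ}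
    (hu : 1 ≤ u) : S u ^ ρ * u ∈ Icc (1 / (8 * Q ^ 2 + 1)) (3 / (8 * P ^ 2)) := by
  have hρ0 : 0 < ρ := hP.trans_le hρ.1
  have hYu : 0 < S u ^ ρ * u := mul_pos (rpow_pos_of_pos (hS.1 u) ρ) (by linarith)
  have hlow := hS.one_le_mul_rpow_mul hu
  have hup := hS.mul_rpow_mul_le_three u
  have hPρ : P ^ 2 ≤ ρ ^ 2 := pow_le_pow_left₀ hP.le hρ.1 2
  have hρQ : ρ ^ 2 ≤ Q ^ 2 := pow_le_pow_left₀ hρ0.le hρ.2 2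
  constructor
  · rw [div_le_iff₀ (by positivity)]
    nlinarith
  · rw [le_div_iff₀ (by positivity)]
    nlinarith

end IsSsol

lemma exists_mem_Icc_of_one_le {K : Set ℝ} (hK : IsCompact K) (hKsub : K ⊆ Ioi 0) :
    ∃ c C : ℝ, 0 < c ∧ c ≤ C ∧ ∀ ρ ∈ K, ∀ S : ℝ → ℝ, IsSsol ρ 1 S → ∀ u : ℝ, 1 ≤ u →
      fRho ρ S u * u ^ (-((1 + ρ) / (2 * ρ ^ 2))) * exp (2 * u) ∈ Icc c C ∧
      gRho ρ 1 S u * u ^ (-((1 - ρ) / (2 * ρ ^ 2))) * exp (2 * u) ∈ Icc c C ∧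
      aRho ρ 1 S u * u ^ (-((1 + ρ) / (2 * ρ ^ 2) - 1)) * exp (2 * u) ∈ Icc c C ∧
      bRho ρ 1 S u * u ^ (-((1 - ρ) / (2 * ρ ^ 2) - 1)) * exp (2 * u) ∈ Icc c C := by
  obtain ⟨P, Q, hP, -, hKPQ⟩ := exists_subset_Icc_of_isCompact hK hKsub
  obtain ⟨c, C, hc, hcC, hprof⟩ :=
    exists_normalizedProfile_bounds (Q := Q) (B := 3 / (8 * P ^ 2)) hP
      (by positivity : (0 : ℝ) < 1 / (8 * Q ^ 2 + 1))
  refine ⟨c, C, hc, hcC, fun ρ hρ S hS u hu => ?_⟩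
  have hρ0 : ρ ≠ 0 := (hKsub hρ).ne'
  have hu0 : 0 < u := by linarith
  rw [hS.fRho_mul_rpow_mul_exp hρ0 hu0, hS.gRho_mul_rpow_mul_exp hρ0 hu0,
    hS.aRho_mul_rpow_mul_exp hρ0 hu0, hS.bRho_mul_rpow_mul_exp hρ0 hu0]
  exact hprof ρ (hKPQ hρ) _ ⟨(rpow_pos_of_pos (hS.1 u) ρ).le, hS.rpow_le_one hu0.le⟩ _
    (hS.rpow_mul_mem_Icc hP (hKPQ hρ) hu)

theorem stmt1 (K : Set ℝ) (hK : IsCompact K) (hKsub : K ⊆ Set.Ioi (0:ℝ)) :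
    ∃ c C u₀ : ℝ, 0 < c ∧ c ≤ C ∧ 0 < u₀ ∧
      ∀ ρ ∈ K, ∀ S : ℝ → ℝ, IsSsol ρ 1 S →
        (∀ u : ℝ, u₀ ≤ u →
          fRho ρ S u * u ^ (-((1 + ρ) / (2 * ρ ^ 2))) * Real.exp (2 * u) ∈ Set.Icc c C ∧
          gRho ρ 1 S u * u ^ (-((1 - ρ) / (2 * ρ ^ 2))) * Real.exp (2 * u) ∈ Set.Icc c C ∧
          aRho ρ 1 S u * u ^ (-((1 + ρ) / (2 * ρ ^ 2) - 1)) * Real.exp (2 * u) ∈ Set.Icc c C ∧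
          bRho ρ 1 S u * u ^ (-((1 - ρ) / (2 * ρ ^ 2) - 1)) * Real.exp (2 * u) ∈ Set.Icc c C) ∧
        (∀ u : ℝ, u ≤ -u₀ →
          fRho ρ S u * |u| ^ (-((1 - ρ) / (2 * ρ ^ 2))) * Real.exp (2 * |u|) ∈ Set.Icc c C ∧
          gRho ρ 1 S u * |u| ^ (-((1 + ρ) / (2 * ρ ^ 2))) * Real.exp (2 * |u|) ∈ Set.Icc c C ∧
          aRho ρ 1 S u * |u| ^ (-((1 - ρ) / (2 * ρ ^ 2) - 1)) * Real.exp (2 * |u|) ∈ Set.Icc c C ∧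
          bRho ρ 1 S u * |u| ^ (-((1 + ρ) / (2 * ρ ^ 2) - 1)) * Real.exp (2 * |u|) ∈ Set.Icc c C) := by
  obtain ⟨c, C, hc, hcC, hpos⟩ := exists_mem_Icc_of_one_le hK hKsub
  refine ⟨c, C, 1, hc, hcC, one_pos, fun ρ hρ S hS => ⟨hpos ρ hρ S hS, fun u hu => ?_⟩⟩
  have hρ0 : ρ ≠ 0 := (hKsub hρ).ne'
  obtain ⟨hf, hg, ha, hb⟩ := hpos ρ hρ S hS (-u) (by linarith)
  simp only [hS.fRho_neg hρ0, hS.gRho_neg hρ0, hS.aRho_neg hρ0, hS.bRho_neg hρ0] at hf hg ha hb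
  rw [abs_of_neg (by linarith)]
  exact ⟨hg, hf, hb, ha⟩
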